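/- Let K be a nonnegative integrable kernel with ∫_ℝ K = 1, c ≥ 2, and let φ ≥ 0 be a bounded C² solution, not identically zero, of either the profile equation φ'' − cφ' + φ(1 − K*φ) = 0 or the truncated profile equation φ'' − cφ' + g_β(φ)(1 − K*φ) = 0 for some β > 1. Then φ(t) > 0 and φ'(t) < λ(c)φ(t) for all t ∈ ℝ, where λ(c) = (c − √(c² − 4))/2. If, in addition, lim_{t→−∞} φ(t) = 0 and φ(t) ≤ 1 for all t ∈ ℝ, then φ'(t) > 0 for all t ∈ ℝ and lim_{t→+∞} φ(t) = 1. -/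

import Mathlib

open Filter MeasureTheory Real Set

noncomputable def conv (K φ : ℝ → ℝ) (t : ℝ) : ℝ := ∫ s, K s * φ (t - s)

def ProfileEq (K : ℝ → ℝ) (c : ℝ) (φ : ℝ → ℝ) : Prop :=
  ∀ t, deriv (deriv φ) t - c * deriv φ t + φ t * (1 - conv K φ t) = 0

noncomputable def gbeta (β u : ℝ) : ℝ := if u ≤ β then u else max 0 (2 * β - u)

def TruncProfileEq (K : ℝ → ℝ) (c β : ℝ) (φ : ℝ → ℝ) : Prop :=
  ∀ t, deriv (deriv φ) t - c * deriv φ t + gbeta β (φ t) * (1 - conv K φ t) = 0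

/-- `λ(c) = (c - √(c² - 4))/2`, the smaller positive root of `z² - cz + 1 = 0`
for `c ≥ 2`. -/
noncomputable def lam (c : ℝ) : ℝ := (c - Real.sqrt (c ^ 2 - 4)) / 2

/-!
A zero of `φ ≥ 0` is a double zero, and `φ'' - cφ' = -g(φ) (1 - K * φ)` is bounded by a multiple
of `φ`, so Gronwall's inequality forces `φ ≡ 0`.

For the gradient bound, `v = φ' - λφ` satisfies `v' - μv = φ'' - cφ' + φ ≥ 0` with `μ = c - λ`,
so `v(t₀) ≥ 0` would keep `v ≥ 0` on `[t₀, ∞)` and make `φ` grow like `e^{λt}`.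

When `φ ≤ 1` the reaction term `φ (1 - K * φ)` is nonnegative, so `e^{-ct} φ'` is nonincreasing:
hence `φ' ≥ 0`, `φ` has a limit `L`, and `L = 1` because otherwise `(φ' - cφ)' → -L (1 - L) < 0`.
A critical point would make `φ ≡ 1` beyond it. But past the first point `x₀` where `φ = 1` the
equation forces `K * φ = 1`, so `K` lives on `(-∞, 0]`, `K * φ ≥ φ`, and `1 - φ` satisfies a
linear differential inequality with zero Cauchy data at `x₀`; Gronwall then gives `φ ≡ 1`,
contradicting `φ(-∞) = 0`.
-/

open Topology

section SecondOrder

variable {u u' u'' : ℝ → ℝ}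

theorem eq_zero_of_abs_deriv2_le_of_le {C a : ℝ} (hu : ∀ t, HasDerivAt u (u' t) t)
    (hu' : ∀ t, HasDerivAt u' (u'' t) t) (h0 : u a = 0) (h1 : u' a = 0)
    (hb : ∀ t, |u'' t| ≤ C * (|u t| + |u' t|)) {t : ℝ} (ht : a ≤ t) : u t = 0 := by
  have hf : ∀ s, HasDerivAt (fun s => (u s, u' s)) (u' s, u'' s) s :=
    fun s => (hu s).prodMk (hu' s)
  refine congrArg Prod.fst (eq_zero_of_abs_deriv_le_mul_abs_self_of_eq_zero_right
    (K := 2 * |C| + 1) (fun s _ => (hf s).continuousAt.continuousWithinAt)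
    (fun s _ => (hf s).hasDerivWithinAt) (by simp [h0, h1]) (fun s _ => ?_) t ⟨ht, le_rfl⟩)
  simp only [Prod.norm_def, Real.norm_eq_abs, max_le_iff]
  have hm := le_max_left |u s| |u' s|
  have hm' := le_max_right |u s| |u' s|
  have hC := (hb s).trans (mul_le_mul_of_nonneg_right (le_abs_self C)
    (add_nonneg (abs_nonneg _) (abs_nonneg _)))
  constructor <;> nlinarith [abs_nonneg C, abs_nonneg (u s)]

theorem eq_zero_of_abs_deriv2_le {C a : ℝ} (hu : ∀ t, HasDerivAt u (u' t) t)
    (hu' : ∀ t, HasDerivAt u' (u'' t) t) (h0 : u a = 0) (h1 : u' a = 0)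
    (hb : ∀ t, |u'' t| ≤ C * (|u t| + |u' t|)) (t : ℝ) : u t = 0 := by
  rcases le_total a t with ht | ht
  · exact eq_zero_of_abs_deriv2_le_of_le hu hu' h0 h1 hb ht
  have hr : ∀ s, HasDerivAt (fun s => 2 * a - s) (-1) s :=
    fun s => by simpa using (hasDerivAt_id s).const_sub (2 * a)
  simpa using eq_zero_of_abs_deriv2_le_of_le (u := fun s => u (2 * a - s))
    (u' := fun s => -u' (2 * a - s)) (u'' := fun s => u'' (2 * a - s))
    (fun s => by have := (hu _).comp s (hr s); rwa [mul_neg_one] at this)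
    (fun s => by have := ((hu' _).comp s (hr s)).neg; rwa [mul_neg_one, neg_neg] at this)
    (by simpa using h0) (by simpa using h1) (fun s => by simpa using hb _)
    (show 2 * a - a ≤ 2 * a - t by linarith)

end SecondOrder

section Growth

variable {g g' : ℝ → ℝ} {k a : ℝ}

theorem exp_mul_le_of_hasDerivAt (hg : ∀ t, HasDerivAt g (g' t) t)
    (h : ∀ t, a ≤ t → k * g t ≤ g' t) {t : ℝ} (ht : a ≤ t) :
    exp (k * (t - a)) * g a ≤ g t := by
  have hw : ∀ s, HasDerivAt (fun s => exp (-(k * (s - a))) * g s)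
      (exp (-(k * (s - a))) * (g' s - k * g s)) s := fun s => by
    have he : HasDerivAt (fun s => exp (-(k * (s - a)))) (exp (-(k * (s - a))) * -k) s := by
      simpa using (((hasDerivAt_id s).sub_const a).const_mul k).neg.exp
    exact (he.mul (hg s)).congr_deriv (by ring)
  have hmono : MonotoneOn (fun s => exp (-(k * (s - a))) * g s) (Ici a) :=
    monotoneOn_of_hasDerivWithinAt_nonneg (convex_Ici a)
      (fun s _ => (hw s).continuousAt.continuousWithinAt) (fun s _ => (hw s).hasDerivWithinAt)
      (fun s hs => mul_nonneg (exp_pos _).le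
        (sub_nonneg.2 (h s (le_of_lt (by simpa using hs)))))
  have hat : g a ≤ exp (-(k * (t - a))) * g t := by
    simpa using hmono self_mem_Ici ht ht
  calc exp (k * (t - a)) * g a ≤ exp (k * (t - a)) * (exp (-(k * (t - a))) * g t) := by gcongr
    _ = g t := by rw [← mul_assoc, ← exp_add]; simp

theorem le_exp_mul_of_hasDerivAt (hg : ∀ t, HasDerivAt g (g' t) t)
    (h : ∀ t, a ≤ t → g' t ≤ k * g t) {t : ℝ} (ht : a ≤ t) :
    g t ≤ exp (k * (t - a)) * g a := by
  have := exp_mul_le_of_hasDerivAt (g := -g) (k := k) (fun t => (hg t).neg)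
    (fun t ht => by rw [Pi.neg_apply]; linarith [h t ht]) ht
  rw [Pi.neg_apply, Pi.neg_apply] at this
  linarith

theorem tendsto_atBot_of_hasDerivAt_le {m : ℝ} (hg : ∀ t, HasDerivAt g (g' t) t) (hm : m < 0)
    (h : ∀ᶠ t in atTop, g' t ≤ m) : Tendsto g atTop atBot := by
  obtain ⟨a, ha⟩ := eventually_atTop.mp h
  have hanti : AntitoneOn (fun t => g t - m * t) (Ici a) :=
    antitoneOn_of_hasDerivWithinAt_nonpos (convex_Ici a)
      (fun s _ => ((hg s).sub ((hasDerivAt_id s).const_mul m)).continuousAt.continuousWithinAt)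
      (fun s _ => ((hg s).sub ((hasDerivAt_id s).const_mul m)).hasDerivWithinAt)
      (fun s hs => by simpa using ha s (le_of_lt (by simpa using hs)))
  have hlin : Tendsto (fun t => g a - m * a + m * t) atTop atBot :=
    tendsto_atBot_add_const_left _ _ (tendsto_id.const_mul_atTop_of_neg hm)
  refine tendsto_atBot_mono' atTop ?_ hlin
  filter_upwards [eventually_ge_atTop a] with t ht
  have := hanti self_mem_Ici ht ht
  simp only at this
  linarith

end Growth

section LinearComparison

variable {φ φ' φ'' : ℝ → ℝ} {c : ℝ}

theorem pos_of_abs_deriv2_sub_le {C : ℝ} (hφ : ∀ t, HasDerivAt φ (φ' t) t)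
    (hφ' : ∀ t, HasDerivAt φ' (φ'' t) t) (hφ0 : ∀ t, 0 ≤ φ t)
    (hb : ∀ t, |φ'' t - c * φ' t| ≤ C * φ t) (hne : ∃ t, φ t ≠ 0) (t₀ : ℝ) : 0 < φ t₀ := by
  refine (hφ0 t₀).lt_of_ne fun h => ?_
  have hmin : IsLocalMin φ t₀ := Eventually.of_forall fun t => h ▸ hφ0 t
  have hb' : ∀ t, |φ'' t| ≤ (|c| + |C|) * (|φ t| + |φ' t|) := fun t => by
    have hC : C * φ t ≤ |C| * |φ t| := by
      rw [abs_of_nonneg (hφ0 t)]; exact mul_le_mul_of_nonneg_right (le_abs_self C) (hφ0 t)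
    calc |φ'' t| = |(φ'' t - c * φ' t) + c * φ' t| := by ring_nf
      _ ≤ |φ'' t - c * φ' t| + |c| * |φ' t| := (abs_add_le _ _).trans_eq (by rw [abs_mul])
      _ ≤ (|c| + |C|) * (|φ t| + |φ' t|) := by
        nlinarith [hb t, abs_nonneg c, abs_nonneg C, abs_nonneg (φ t), abs_nonneg (φ' t)]
  obtain ⟨t, ht⟩ := hne
  exact ht (eq_zero_of_abs_deriv2_le hφ hφ' h.symm (hmin.hasDerivAt_eq_zero (hφ t₀)) hb' t)

theorem lam_pos (hc : 2 ≤ c) : 0 < lam c := by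
  have hsq : sqrt (c ^ 2 - 4) < c := (sqrt_lt' (by linarith)).2 (by linarith)
  unfold lam; linarith

theorem lam_mul_sub_lam (hc : 2 ≤ c) : lam c * (c - lam c) = 1 := by
  have hsq := sq_sqrt (show 0 ≤ c ^ 2 - 4 by nlinarith)
  unfold lam; linear_combination -hsq / 4

theorem lt_lam_mul_of_bddAbove (hc : 2 ≤ c) (hφ : ∀ t, HasDerivAt φ (φ' t) t)
    (hφ' : ∀ t, HasDerivAt φ' (φ'' t) t) (hpos : ∀ t, 0 < φ t) (hbdd : BddAbove (range φ))
    (hsuper : ∀ t, 0 ≤ φ'' t - c * φ' t + φ t) (t₀ : ℝ) : φ' t₀ < lam c * φ t₀ := by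
  by_contra! h
  have hslope : ∀ t, t₀ ≤ t → lam c * φ t ≤ φ' t := fun t ht => by
    have := exp_mul_le_of_hasDerivAt (g := fun t => φ' t - lam c * φ t) (k := c - lam c)
      (fun t => (hφ' t).sub ((hφ t).const_mul (lam c)))
      (fun s _ => by linear_combination hsuper s - φ s * lam_mul_sub_lam hc) ht
    nlinarith [exp_pos ((c - lam c) * (t - t₀))]
  have hgrow : ∀ t, t₀ ≤ t → exp (lam c * (t - t₀)) * φ t₀ ≤ φ t :=
    fun t ht => exp_mul_le_of_hasDerivAt hφ hslope ht
  have hlim : Tendsto (fun t => exp (lam c * (t - t₀)) * φ t₀) atTop atTop :=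
    (tendsto_exp_atTop.comp (((tendsto_atTop_add_const_right atTop (-t₀) tendsto_id).congr
      fun t => (sub_eq_add_neg t t₀).symm).const_mul_atTop (lam_pos hc))).atTop_mul_const (hpos t₀)
  obtain ⟨M, hM⟩ := hbdd
  obtain ⟨t, ht₀, hMt⟩ := ((eventually_ge_atTop t₀).and (hlim.eventually_gt_atTop M)).exists
  exact (hMt.trans_le (hgrow t ht₀)).not_ge (hM ⟨t, rfl⟩)

theorem nonneg_of_hasDerivAt_le_mul (hφ : ∀ t, HasDerivAt φ (φ' t) t)
    (hφ' : ∀ t, HasDerivAt φ' (φ'' t) t) (hc : 0 ≤ c)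
    (h : ∀ t, φ'' t ≤ c * φ' t) (hbdd : BddBelow (range φ)) (t₀ : ℝ) : 0 ≤ φ' t₀ := by
  by_contra! hneg
  have hle : ∀ t, t₀ ≤ t → φ' t ≤ φ' t₀ := fun t ht => by
    have := le_exp_mul_of_hasDerivAt hφ' (fun s _ => h s) ht
    nlinarith [one_le_exp (mul_nonneg hc (sub_nonneg.2 ht))]
  have hbot := tendsto_atBot_of_hasDerivAt_le hφ hneg
    (by filter_upwards [eventually_ge_atTop t₀] with t ht using hle t ht)
  exact not_bddBelow_of_tendsto_atBot hbot hbdd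

end LinearComparison

theorem gbeta_nonneg {β u : ℝ} (hu : 0 ≤ u) : 0 ≤ gbeta β u := by
  unfold gbeta; split_ifs
  exacts [hu, le_max_left _ _]

theorem gbeta_le_self {β u : ℝ} (hu : 0 ≤ u) : gbeta β u ≤ u := by
  unfold gbeta; split_ifs with h
  exacts [le_rfl, max_le hu (by linarith)]

theorem gbeta_of_le {β u : ℝ} (h : u ≤ β) : gbeta β u = u := if_pos h

theorem exists_reaction_of_profileEq_or_truncProfileEq {K φ : ℝ → ℝ} {c : ℝ}
    (h : ProfileEq K c φ ∨ ∃ β, 1 < β ∧ TruncProfileEq K c β φ) :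
    ∃ f : ℝ → ℝ, (∀ t, deriv (deriv φ) t - c * deriv φ t + f (φ t) * (1 - conv K φ t) = 0) ∧
      (∀ u, 0 ≤ u → 0 ≤ f u ∧ f u ≤ u) ∧ ∀ u, u ≤ 1 → f u = u := by
  rcases h with h | ⟨β, hβ, h⟩
  · exact ⟨id, h, fun u hu => ⟨hu, le_rfl⟩, fun _ _ => rfl⟩
  · exact ⟨gbeta β, h, fun u hu => ⟨gbeta_nonneg hu, gbeta_le_self hu⟩,
      fun u hu => gbeta_of_le (hu.trans hβ.le)⟩

section Convolution

variable {K φ : ℝ → ℝ}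

theorem integrable_mul_comp_sub {B : ℝ} (hKi : Integrable K) (hφ : Continuous φ)
    (hB : ∀ x, |φ x| ≤ B) (t : ℝ) : Integrable (fun s => K s * φ (t - s)) :=
  hKi.mul_bdd (hφ.comp (continuous_sub_left t)).aestronglyMeasurable
    (Eventually.of_forall fun s => hB (t - s))

theorem conv_nonneg (hK0 : ∀ᵐ s, 0 ≤ K s) (hφ0 : ∀ x, 0 ≤ φ x) (t : ℝ) : 0 ≤ conv K φ t :=
  integral_nonneg_of_ae (by filter_upwards [hK0] with s hs using mul_nonneg hs (hφ0 _))

theorem conv_le {B t : ℝ} (hKi : Integrable K) (hK0 : ∀ᵐ s, 0 ≤ K s) (hK1 : ∫ s, K s = 1)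
    (hint : Integrable (fun s => K s * φ (t - s))) (hB : ∀ x, φ x ≤ B) : conv K φ t ≤ B := by
  calc conv K φ t ≤ ∫ s, K s * B := integral_mono_ae hint (hKi.mul_const B)
        (by filter_upwards [hK0] with s hs using mul_le_mul_of_nonneg_left (hB _) hs)
    _ = B := by rw [integral_mul_const, hK1, one_mul]

theorem le_conv_of_monotone {t : ℝ} (hKi : Integrable K) (hK0 : ∀ᵐ s, 0 ≤ K s)
    (hK1 : ∫ s, K s = 1) (hint : Integrable (fun s => K s * φ (t - s)))
    (hsupp : ∀ᵐ s, 0 < s → K s = 0) (hmono : Monotone φ) : φ t ≤ conv K φ t := by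
  calc φ t = ∫ s, K s * φ t := by rw [integral_mul_const, hK1, one_mul]
    _ ≤ conv K φ t := integral_mono_ae (hKi.mul_const _) hint (by
        filter_upwards [hK0, hsupp] with s hs hs'
        rcases le_or_gt s 0 with hs0 | hs0
        · exact mul_le_mul_of_nonneg_left (hmono (by linarith)) hs
        · simp [hs' hs0])

theorem ae_pos_imp_eq_zero_of_conv_eq_one {x₀ : ℝ} (hKi : Integrable K)
    (hK0 : ∀ᵐ s, 0 ≤ K s) (hK1 : ∫ s, K s = 1)
    (hint : ∀ t, Integrable (fun s => K s * φ (t - s))) (hφ1 : ∀ x, φ x ≤ 1)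
    (hlt : ∀ x, x < x₀ → φ x < 1) (hconv : ∀ t, x₀ < t → conv K φ t = 1) :
    ∀ᵐ s, 0 < s → K s = 0 := by
  -- `1 - (K * φ)(t) = ∫ K(s) (1 - φ(t - s)) ds` has a nonnegative integrand
  have hvanish : ∀ t, x₀ < t → ∀ᵐ s, K s * (1 - φ (t - s)) = 0 := fun t ht => by
    have hi : Integrable (fun s => K s * (1 - φ (t - s))) :=
      (hKi.sub (hint t)).congr (ae_of_all _ fun s => by simp only [Pi.sub_apply]; ring)
    refine (integral_eq_zero_iff_of_nonneg_ae ?_ hi).mp ?_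
    · filter_upwards [hK0] with s hs using mul_nonneg hs (sub_nonneg.2 (hφ1 _))
    · simp only [mul_sub, mul_one]
      rw [integral_sub hKi (hint t), hK1, ← conv, hconv t ht, sub_self]
  have hseq := ae_all_iff.2 fun n : ℕ =>
    hvanish (x₀ + 1 / (n + 1)) (lt_add_of_pos_right x₀ Nat.one_div_pos_of_nat)
  filter_upwards [hseq] with s hs hs0
  obtain ⟨n, hn⟩ := exists_nat_one_div_lt hs0
  exact (mul_eq_zero.mp (hs n)).resolve_right (sub_ne_zero.2 (hlt _ (by linarith)).ne')

theorem tendsto_conv_atTop {B L : ℝ} (hKi : Integrable K) (hK1 : ∫ s, K s = 1)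
    (hφ : Continuous φ) (hB : ∀ x, |φ x| ≤ B) (hlim : Tendsto φ atTop (𝓝 L)) :
    Tendsto (conv K φ) atTop (𝓝 L) := by
  have hL : ∫ s, K s * L = L := by rw [integral_mul_const, hK1, one_mul]
  rw [← hL]
  refine tendsto_integral_filter_of_dominated_convergence (fun s => |K s| * B)
    (Eventually.of_forall fun t => (integrable_mul_comp_sub hKi hφ hB t).aestronglyMeasurable)
    (Eventually.of_forall fun t => Eventually.of_forall fun s => ?_) (hKi.abs.mul_const B)
    (Eventually.of_forall fun s => (hlim.comp (tendsto_atTop_add_const_right atTop (-s)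
      tendsto_id)).const_mul (K s))
  rw [norm_mul, Real.norm_eq_abs, Real.norm_eq_abs]
  exact mul_le_mul_of_nonneg_left (hB _) (abs_nonneg _)

end Convolution

section Profile

variable {K φ : ℝ → ℝ} {c : ℝ}

theorem hasDerivAt_deriv_of_contDiff_two (hφ : ContDiff ℝ 2 φ) (t : ℝ) :
    HasDerivAt (deriv φ) (deriv (deriv φ) t) t := by
  have h : ContDiff ℝ (1 + 1) φ := hφ
  exact ((contDiff_succ_iff_deriv.mp h).2.2.differentiable one_ne_zero t).hasDerivAt

theorem conv_eq_one_of_eq_one {t : ℝ} (hφ1 : ∀ x, φ x ≤ 1)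
    (hmono : ∀ x, 0 ≤ deriv φ x) (heq : ProfileEq K c φ) (ht : φ t = 1) :
    conv K φ t = 1 := by
  have hmax : IsLocalMax φ t := Eventually.of_forall fun x => ht ▸ hφ1 x
  have h1 : deriv φ t = 0 := hmax.deriv_eq_zero
  have h2 : deriv (deriv φ) t = 0 :=
    IsLocalMin.deriv_eq_zero (Eventually.of_forall fun x => h1 ▸ hmono x)
  have := heq t
  rw [h1, h2, ht] at this
  linarith

theorem lt_one_of_profileEq (hKi : Integrable K) (hK0 : ∀ᵐ s, 0 ≤ K s) (hK1 : ∫ s, K s = 1)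
    (hφ : ContDiff ℝ 2 φ) (hφ0 : ∀ x, 0 ≤ φ x) (hφ1 : ∀ x, φ x ≤ 1)
    (hmono : ∀ x, 0 ≤ deriv φ x) (hbot : Tendsto φ atBot (𝓝 0)) (heq : ProfileEq K c φ)
    (t : ℝ) : φ t < 1 := by
  refine (hφ1 t).lt_of_ne fun ht => ?_
  have hD1 : ∀ x, HasDerivAt φ (deriv φ x) x :=
    fun x => (hφ.differentiable two_ne_zero x).hasDerivAt
  have hD2 := hasDerivAt_deriv_of_contDiff_two hφ
  have hint := integrable_mul_comp_sub hKi hφ.continuous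
    (fun x => (abs_of_nonneg (hφ0 x)).trans_le (hφ1 x))
  have hmono' : Monotone φ := monotone_of_hasDerivAt_nonneg hD1 hmono
  obtain ⟨T, hT⟩ := eventually_atBot.mp (hbot.eventually_lt_const one_pos)
  have hSbdd : BddBelow {x | φ x = 1} :=
    ⟨T, fun x hx => le_of_not_ge fun hxT => (hT x hxT).ne hx⟩
  set x₀ := sInf {x | φ x = 1}
  have hx₀ : φ x₀ = 1 :=
    (isClosed_eq hφ.continuous continuous_const).csInf_mem ⟨t, ht⟩ hSbdd
  have hlt : ∀ x, x < x₀ → φ x < 1 :=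
    fun x hx => (hφ1 x).lt_of_ne fun h => (csInf_le hSbdd h).not_gt hx
  have hone : ∀ x, x₀ ≤ x → φ x = 1 := fun x hx => le_antisymm (hφ1 x) (hx₀ ▸ hmono' hx)
  have hsupp := ae_pos_imp_eq_zero_of_conv_eq_one hKi hK0 hK1 hint hφ1 hlt
    fun x hx => conv_eq_one_of_eq_one hφ1 hmono heq (hone x hx.le)
  have hb : ∀ x, |-deriv (deriv φ) x| ≤ (|c| + 1) * (|1 - φ x| + |-deriv φ x|) := fun x => by
    have hge := le_conv_of_monotone hKi hK0 hK1 (hint x) hsupp hmono'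
    have hle := conv_le hKi hK0 hK1 (hint x) hφ1
    have hF : 0 ≤ φ x * (1 - conv K φ x) := mul_nonneg (hφ0 x) (by linarith)
    have hF' : φ x * (1 - conv K φ x) ≤ 1 - φ x := by nlinarith [hφ1 x, hφ0 x]
    rw [abs_neg, abs_neg, abs_of_nonneg (sub_nonneg.2 (hφ1 x)),
      show deriv (deriv φ) x = c * deriv φ x - φ x * (1 - conv K φ x) by linarith [heq x]]
    calc |c * deriv φ x - φ x * (1 - conv K φ x)|
        ≤ |c| * |deriv φ x| + φ x * (1 - conv K φ x) :=
          (abs_sub _ _).trans_eq (by rw [abs_mul, abs_of_nonneg hF])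
      _ ≤ (|c| + 1) * (1 - φ x + |deriv φ x|) := by
          nlinarith [abs_nonneg c, abs_nonneg (deriv φ x)]
  have hψ := eq_zero_of_abs_deriv2_le (fun x => (hD1 x).const_sub 1) (fun x => (hD2 x).neg)
    (sub_eq_zero.2 hx₀.symm)
    (neg_eq_zero.2 (IsLocalMax.deriv_eq_zero (Eventually.of_forall fun x => hx₀ ▸ hφ1 x))) hb
  have h1 : Tendsto φ atBot (𝓝 1) :=
    tendsto_const_nhds.congr fun x => sub_eq_zero.1 (hψ x)
  exact one_ne_zero (tendsto_nhds_unique h1 hbot)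

theorem tendsto_one_of_profileEq (hKi : Integrable K) (hK1 : ∫ s, K s = 1) (hc : 0 ≤ c)
    (hφ : ContDiff ℝ 2 φ) (hpos : ∀ x, 0 < φ x) (hφ1 : ∀ x, φ x ≤ 1)
    (hmono : ∀ x, 0 ≤ deriv φ x) (heq : ProfileEq K c φ) :
    Tendsto φ atTop (𝓝 1) := by
  have hD1 : ∀ x, HasDerivAt φ (deriv φ x) x :=
    fun x => (hφ.differentiable two_ne_zero x).hasDerivAt
  have hbdd : BddAbove (range φ) := ⟨1, by rintro _ ⟨x, rfl⟩; exact hφ1 x⟩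
  obtain ⟨L, hlim, hL0, hL1⟩ : ∃ L, Tendsto φ atTop (𝓝 L) ∧ 0 < L ∧ L ≤ 1 :=
    ⟨_, tendsto_atTop_ciSup (monotone_of_hasDerivAt_nonneg hD1 hmono) hbdd,
      (hpos 0).trans_le (le_ciSup hbdd 0), ciSup_le hφ1⟩
  rcases hL1.lt_or_eq with hL1 | rfl
  swap
  · exact hlim
  exfalso
  have hreact : Tendsto (fun x => φ x * (1 - conv K φ x)) atTop (𝓝 (L * (1 - L))) :=
    hlim.mul (tendsto_const_nhds.sub (tendsto_conv_atTop hKi hK1 hφ.continuous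
      (fun x => (abs_of_pos (hpos x)).trans_le (hφ1 x)) hlim))
  have hgap : 0 < L * (1 - L) := mul_pos hL0 (by linarith)
  have hbot := tendsto_atBot_of_hasDerivAt_le (g := fun x => deriv φ x - c * φ x)
    (fun x => (hasDerivAt_deriv_of_contDiff_two hφ x).sub ((hD1 x).const_mul c))
    (neg_lt_zero.2 (half_pos hgap)) (by
      filter_upwards [hreact.eventually_const_lt (half_lt_self hgap)] with x hx
      linarith [heq x])
  obtain ⟨x, hx⟩ := (hbot.eventually_lt_atBot (-c)).exists
  nlinarith [hmono x, hφ1 x]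

theorem deriv_pos_and_tendsto_one_of_profileEq (hKi : Integrable K) (hK0 : ∀ᵐ s, 0 ≤ K s)
    (hK1 : ∫ s, K s = 1) (hc : 0 ≤ c) (hφ : ContDiff ℝ 2 φ) (hpos : ∀ x, 0 < φ x)
    (hφ1 : ∀ x, φ x ≤ 1) (hbot : Tendsto φ atBot (𝓝 0)) (heq : ProfileEq K c φ) :
    (∀ x, 0 < deriv φ x) ∧ Tendsto φ atTop (𝓝 1) := by
  have hD1 : ∀ x, HasDerivAt φ (deriv φ x) x :=
    fun x => (hφ.differentiable two_ne_zero x).hasDerivAt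
  have hD2 := hasDerivAt_deriv_of_contDiff_two hφ
  have hsub : ∀ x, deriv (deriv φ) x ≤ c * deriv φ x := fun x => by
    have := conv_le hKi hK0 hK1 (integrable_mul_comp_sub hKi hφ.continuous
      (fun y => (abs_of_pos (hpos y)).trans_le (hφ1 y)) x) hφ1
    nlinarith [heq x, hpos x]
  have hmono : ∀ x, 0 ≤ deriv φ x :=
    nonneg_of_hasDerivAt_le_mul hD1 hD2 hc hsub ⟨0, by rintro _ ⟨x, rfl⟩; exact (hpos x).le⟩
  have hlim := tendsto_one_of_profileEq hKi hK1 hc hφ hpos hφ1 hmono heq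
  refine ⟨fun x₁ => (hmono x₁).lt_of_ne' fun h0 => ?_, hlim⟩
  have hflat : ∀ x, x₁ ≤ x → deriv φ x ≤ 0 := fun x hx => by
    simpa [h0] using le_exp_mul_of_hasDerivAt hD2 (fun s _ => hsub s) hx
  have hconst : ∀ x, x₁ ≤ x → φ x = φ x₁ := fun x hx =>
    le_antisymm (antitoneOn_of_hasDerivWithinAt_nonpos (convex_Ici x₁)
      (fun y _ => (hD1 y).continuousAt.continuousWithinAt) (fun y _ => (hD1 y).hasDerivWithinAt)
      (fun y hy => hflat y (le_of_lt (by simpa using hy))) self_mem_Ici hx hx)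
      (monotone_of_hasDerivAt_nonneg hD1 hmono hx)
  have h1 : φ x₁ = 1 := tendsto_nhds_unique
    (tendsto_const_nhds.congr' (eventually_atTop.2 ⟨x₁, fun x hx => (hconst x hx).symm⟩)) hlim
  exact (lt_one_of_profileEq hKi hK0 hK1 hφ (fun x => (hpos x).le) hφ1 hmono hbot heq x₁).ne h1

end Profile

/-- positivity of nontrivial nonnegative bounded solutions,
the gradient estimate `φ' < λ(c) φ`, and monotone convergence to `1` for
solutions with `φ(-∞) = 0` and `φ ≤ 1`. -/
theorem solution_positivity_and_monotonicity
    (K : ℝ → ℝ) (hKi : Integrable K)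
    (hK0 : ∀ᵐ s ∂(volume : Measure ℝ), 0 ≤ K s)
    (hK1 : (∫ s, K s) = 1)
    (c : ℝ) (hc : 2 ≤ c)
    (φ : ℝ → ℝ) (hφC : ContDiff ℝ 2 φ) (hφ0 : ∀ t, 0 ≤ φ t)
    (hbdd : ∃ M, ∀ t, φ t ≤ M) (hne : ∃ t, φ t ≠ 0)
    (heq : ProfileEq K c φ ∨ ∃ β, 1 < β ∧ TruncProfileEq K c β φ) :
    (∀ t, 0 < φ t) ∧ (∀ t, deriv φ t < lam c * φ t) ∧
    (Tendsto φ atBot (nhds 0) → (∀ t, φ t ≤ 1) →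
      (∀ t, 0 < deriv φ t) ∧ Tendsto φ atTop (nhds 1)) := by
  obtain ⟨M, hM⟩ := hbdd
  have hM0 : 0 ≤ M := (hφ0 0).trans (hM 0)
  obtain ⟨f, hf, hf0, hf1⟩ := exists_reaction_of_profileEq_or_truncProfileEq heq
  have hD1 : ∀ t, HasDerivAt φ (deriv φ t) t :=
    fun t => (hφC.differentiable two_ne_zero t).hasDerivAt
  have hD2 := hasDerivAt_deriv_of_contDiff_two hφC
  have hconv0 := conv_nonneg hK0 hφ0
  have hconvM := fun t => conv_le hKi hK0 hK1 (integrable_mul_comp_sub hKi hφC.continuous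
    (fun x => (abs_of_nonneg (hφ0 x)).trans_le (hM x)) t) hM
  have hreact : ∀ t, deriv (deriv φ) t - c * deriv φ t = -(f (φ t) * (1 - conv K φ t)) :=
    fun t => by linarith [hf t]
  have hpos : ∀ t, 0 < φ t := pos_of_abs_deriv2_sub_le hD1 hD2 hφ0 (C := 1 + M) (fun t => by
    obtain ⟨hf0t, hft⟩ := hf0 _ (hφ0 t)
    rw [hreact, abs_neg, abs_mul, abs_of_nonneg hf0t, mul_comm]
    exact mul_le_mul (abs_le.2 ⟨by linarith [hconvM t], by linarith [hconv0 t]⟩) hft hf0t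
      (by linarith)) hne
  refine ⟨hpos, ?_, fun hbot h1 => ?_⟩
  · refine lt_lam_mul_of_bddAbove hc hD1 hD2 hpos ⟨M, by rintro _ ⟨t, rfl⟩; exact hM t⟩
      fun t => ?_
    obtain ⟨hf0t, hft⟩ := hf0 _ (hφ0 t)
    nlinarith [hreact t, hconv0 t]
  · refine deriv_pos_and_tendsto_one_of_profileEq hKi hK0 hK1 (zero_le_two.trans hc) hφC hpos h1
      hbot fun t => ?_
    rw [← hf1 _ (h1 t)]
    exact hf t
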